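/- Eventual monotonicity of the top values (Lemma 3.2(v)): With probability one there exists t_0 > 0 such that, for each i ∈ {1,2,3}, the function u ↦ Φ_u(Z_u^{(i)}) is strictly increasing on (t_0,∞); that is, for all t_0 < s < u one has Φ_s(Z_s^{(i)}) < Φ_u(Z_u^{(i)}). -/

import Mathlib

open MeasureTheory Filter Topology ProbabilityTheory

namespace PAM

/-- ℓ¹ norm of a lattice point, as a natural number. -/
def normZ {d : ℕ} (z : Fin d → ℤ) : ℕ := ∑ i, (z i).natAbs

/-- ℓ¹ norm of a lattice point, as a real number. -/
noncomputable def norm1 {d : ℕ} (z : Fin d → ℤ) : ℝ := normZ z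

/-- ℓ¹ norm on `ℝ^d`. -/
noncomputable def norm1R {d : ℕ} (x : Fin d → ℝ) : ℝ := ∑ i, |x i|

/-- The set of nearest-neighbour lattice paths of length `n` starting at the origin and
passing through `z`. -/
def pathsThrough (d n : ℕ) (z : Fin d → ℤ) : Set (Fin (n + 1) → Fin d → ℤ) :=
  {y | y 0 = 0 ∧ (∀ i : Fin n, normZ (y i.succ - y i.castSucc) = 1) ∧ ∃ i, y i = z}

/-- `N(n,z)`: the number of nearest-neighbour lattice paths of length `n` starting at the
origin and passing through `z`. -/
noncomputable def Npath (d n : ℕ) (z : Fin d → ℤ) : ℕ := (pathsThrough d n z).ncard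

/-- `η(n,z) = log N(n,z)`. -/
noncomputable def etaN (d n : ℕ) (z : Fin d → ℤ) : ℝ := Real.log (Npath d n z)

/-- `η(z) = log N(z)` where `N(z) = N(|z|,z)`. -/
noncomputable def eta {d : ℕ} (z : Fin d → ℤ) : ℝ := etaN d (normZ z) z

/-- The functional `Φ_t` associated with the potential `ξ`. -/
noncomputable def Phi {d : ℕ} (ξ : (Fin d → ℤ) → ℝ) (t : ℝ) (z : Fin d → ℤ) : ℝ :=
  if norm1 z ≤ t * ξ z then ξ z - norm1 z / t * Real.log (ξ z) + eta z / t else 0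

/-- The discrete Laplacian on `ℤ^d`. -/
noncomputable def lap {d : ℕ} (f : (Fin d → ℤ) → ℝ) (z : Fin d → ℤ) : ℝ :=
  ∑ i : Fin d, ((f (z + fun j => if j = i then 1 else 0) - f z)
              + (f (z - fun j => if j = i then 1 else 0) - f z))

/-- `X` is Pareto(α)-distributed under `P`. -/
def IsPareto {Ω : Type*} [MeasurableSpace Ω] (P : Measure Ω) (α : ℝ) (X : Ω → ℝ) : Prop :=
  (∀ x : ℝ, 1 ≤ x → P {ω | X ω ≤ x} = ENNReal.ofReal (1 - x ^ (-α))) ∧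
  ∀ x : ℝ, x < 1 → P {ω | X ω ≤ x} = 0

/-- `u` is a nonnegative solution of the parabolic Anderson problem with potential `ξ` and
localized initial condition, whose total mass is finite at all times. -/
structure IsPAMSolution {d : ℕ} (ξ : (Fin d → ℤ) → ℝ) (u : ℝ → (Fin d → ℤ) → ℝ) : Prop where
  nonneg : ∀ t, 0 < t → ∀ z, 0 ≤ u t z
  pde : ∀ z, ∀ t, 0 < t → HasDerivAt (fun s => u s z) (lap (u t) z + ξ z * u t z) t
  init : ∀ z : Fin d → ℤ,
    Tendsto (fun t => u t z) (nhdsWithin 0 (Set.Ioi 0)) (nhds (if z = 0 then 1 else 0))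
  summable : ∀ t, 0 < t → Summable fun z => u t z

/-- The total mass `U(t)` of a solution. -/
noncomputable def totalMass {d : ℕ} (u : ℝ → (Fin d → ℤ) → ℝ) (t : ℝ) : ℝ := ∑' z, u t z

/-- The `i`-th largest value of the potential `ξ` in the centred ℓ¹-ball of radius `r`. -/
noncomputable def orderStat {d : ℕ} (ξ : (Fin d → ℤ) → ℝ) (r : ℝ) (i : ℕ) : ℝ :=
  sSup {y : ℝ | i ≤ Set.ncard {z : Fin d → ℤ | norm1 z ≤ r ∧ y ≤ ξ z}}

/-- `q = d/(α−d)`. -/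
noncomputable def qex (d : ℕ) (α : ℝ) : ℝ := d / (α - d)

/-- `r_t = (t / log t)^{q+1}`. -/
noncomputable def rt (d : ℕ) (α : ℝ) (t : ℝ) : ℝ := (t / Real.log t) ^ (qex d α + 1)

/-- `a_t = (t / log t)^{q}`. -/
noncomputable def amt (d : ℕ) (α : ℝ) (t : ℝ) : ℝ := (t / Real.log t) ^ qex d α

/-- The Euler Beta function. -/
noncomputable def betaFn (a b : ℝ) : ℝ := Real.Gamma a * Real.Gamma b / Real.Gamma (a + b)

/-- `θ = 2^d B(α−d,d) / (q^d (d−1)!)`. -/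
noncomputable def theta (d : ℕ) (α : ℝ) : ℝ :=
  2 ^ d * betaFn (α - d) d / (qex d α ^ d * (Nat.factorial (d - 1) : ℝ))


-- Auxiliary lemmas

lemma normZ_eq_zero_iff {d : ℕ} {z : Fin d → ℤ} : normZ z = 0 ↔ z = 0 := by
  simp [normZ, Finset.sum_eq_zero_iff, funext_iff]

lemma stepSet_finite (d : ℕ) : ({v : Fin d → ℤ | normZ v = 1}).Finite := by
  apply Set.Finite.subset (Set.Finite.pi (fun _ : Fin d => (Set.finite_Icc (-1 : ℤ) 1)))
  intro v hv i _
  have h1 : (v i).natAbs ≤ ∑ j, (v j).natAbs :=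
    Finset.single_le_sum (f := fun j => (v j).natAbs) (fun j _ => Nat.zero_le _)
      (Finset.mem_univ i)
  have : (v i).natAbs ≤ 1 := by
    have := hv; simp only [Set.mem_setOf_eq, normZ] at this; omega
  simp only [Set.mem_Icc]; omega

noncomputable def stepCard (d : ℕ) : ℕ := ({v : Fin d → ℤ | normZ v = 1}).ncard

lemma one_le_stepCard {d : ℕ} (hd : 1 ≤ d) : 1 ≤ stepCard d := by
  have hne : ({v : Fin d → ℤ | normZ v = 1}).Nonempty := by
    refine ⟨fun j => if j = ⟨0, hd⟩ then 1 else 0, ?_⟩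
    simp only [Set.mem_setOf_eq, normZ]
    rw [Finset.sum_eq_single ⟨0, hd⟩]
    · simp
    · intro b _ hb; simp [hb]
    · simp
  have := (Set.ncard_pos (stepSet_finite d)).mpr hne
  unfold stepCard; omega

lemma Npath_le (d n : ℕ) (z : Fin d → ℤ) : Npath d n z ≤ stepCard d ^ n := by
  classical
  have hV : ({v : Fin d → ℤ | normZ v = 1}).Finite := stepSet_finite d
  set f : (Fin (n+1) → Fin d → ℤ) → (Fin n → Fin d → ℤ) :=
    fun y i => y i.succ - y i.castSucc with hf
  have hinj : Set.InjOn f (pathsThrough d n z) := by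
    intro y hy y' hy' h
    have hall : ∀ k : Fin (n+1), y k = y' k := by
      intro k
      induction k using Fin.induction with
      | zero => rw [hy.1, hy'.1]
      | succ k ih =>
        have hk : f y k = f y' k := by rw [h]
        simp only [hf] at hk
        have : y k.succ = (y k.succ - y k.castSucc) + y k.castSucc := by abel
        rw [this, hk, ih]
        abel
    funext k; exact hall k
  have himg : f '' pathsThrough d n z ⊆
      ↑(Fintype.piFinset fun _ : Fin n => hV.toFinset) := by
    rintro _ ⟨y, hy, rfl⟩
    simp only [Finset.coe_sort_coe, Finset.mem_coe, Fintype.mem_piFinset, Set.Finite.mem_toFinset]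
    intro i
    exact hy.2.1 i
  calc Npath d n z = (f '' pathsThrough d n z).ncard := (Set.ncard_image_of_injOn hinj).symm
    _ ≤ (↑(Fintype.piFinset fun _ : Fin n => hV.toFinset) : Set _).ncard :=
        Set.ncard_le_ncard himg (Finset.finite_toSet _)
    _ = (Fintype.piFinset fun _ : Fin n => hV.toFinset).card := Set.ncard_coe_finset _
    _ = ∏ _i : Fin n, hV.toFinset.card := Fintype.card_piFinset _
    _ = stepCard d ^ n := by
        rw [Finset.prod_const, Finset.card_univ, Fintype.card_fin]
        congr 1
        rw [stepCard, Set.ncard_eq_toFinset_card _ hV]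

lemma eta_nonneg {d : ℕ} (z : Fin d → ℤ) : 0 ≤ eta z := by
  unfold eta etaN
  rcases Nat.eq_zero_or_pos (Npath d (normZ z) z) with h | h
  · simp [h]
  · apply Real.log_nonneg; exact_mod_cast h

lemma eta_le {d : ℕ} (hd : 1 ≤ d) (z : Fin d → ℤ) :
    eta z ≤ (normZ z : ℝ) * Real.log (stepCard d) := by
  unfold eta etaN
  have hK := one_le_stepCard hd
  have hlogK : 0 ≤ Real.log (stepCard d) := Real.log_nonneg (by exact_mod_cast hK)
  rcases Nat.eq_zero_or_pos (Npath d (normZ z) z) with h | h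
  · simp [h]; positivity
  · have h1 : Real.log (Npath d (normZ z) z) ≤ Real.log ((stepCard d : ℝ) ^ (normZ z)) := by
      apply Real.log_le_log (by exact_mod_cast h)
      exact_mod_cast Npath_le d (normZ z) z
    rw [Real.log_pow] at h1
    exact h1



lemma Phi_eq {d : ℕ} (ξ : (Fin d → ℤ) → ℝ) {t : ℝ} (ht : t ≠ 0) {z : Fin d → ℤ}
    (hw : norm1 z ≤ t * ξ z) :
    Phi ξ t z = ξ z - (norm1 z * Real.log (ξ z) - eta z) / t := by
  rw [Phi, if_pos hw]
  field_simp
  ring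

lemma Phi_strict_mono {d : ℕ} (hd : 1 ≤ d) (ξ : (Fin d → ℤ) → ℝ) {s u : ℝ} {z : Fin d → ℤ}
    (hξ1 : 1 ≤ ξ z) (hz : z ≠ 0) (hK : (stepCard d : ℝ) < ξ z)
    (hw : norm1 z ≤ s * ξ z) (hs : 0 < s) (hsu : s < u) :
    Phi ξ s z < Phi ξ u z := by
  have hξ0 : 0 < ξ z := by linarith
  have hwu : norm1 z ≤ u * ξ z := le_trans hw (by nlinarith)
  rw [Phi_eq ξ (ne_of_gt hs) hw, Phi_eq ξ (ne_of_gt (lt_trans hs hsu)) hwu]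
  have hKpos : (0:ℝ) < (stepCard d : ℝ) := by
    exact_mod_cast Nat.lt_of_lt_of_le Nat.zero_lt_one (one_le_stepCard hd)
  have hlog : Real.log (stepCard d) < Real.log (ξ z) := Real.log_lt_log hKpos hK
  have hnz : 1 ≤ (normZ z : ℝ) := by
    have : normZ z ≠ 0 := fun h => hz (normZ_eq_zero_iff.mp h)
    exact_mod_cast Nat.one_le_iff_ne_zero.mpr this
  have hA : 0 < norm1 z * Real.log (ξ z) - eta z := by
    have h1 := eta_le hd z
    have : (normZ z : ℝ) * Real.log (stepCard d) < (normZ z : ℝ) * Real.log (ξ z) := by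
      apply mul_lt_mul_of_pos_left hlog (by linarith)
    rw [norm1]
    linarith
  have := div_lt_div_of_pos_left hA hs hsu
  linarith

lemma Phi_upper {d : ℕ} (hd : 1 ≤ d) (ξ : (Fin d → ℤ) → ℝ) {t : ℝ} (ht : 0 < t)
    {z : Fin d → ℤ} (hξ1 : 1 ≤ ξ z) :
    Phi ξ t z ≤ ξ z * (1 + Real.log (stepCard d)) := by
  have hL : 0 ≤ Real.log (stepCard d) :=
    Real.log_nonneg (by exact_mod_cast one_le_stepCard hd)
  rw [Phi]
  split_ifs with hw
  · have hlogξ : 0 ≤ Real.log (ξ z) := Real.log_nonneg hξ1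
    have hn0 : 0 ≤ norm1 z := by rw [norm1]; positivity
    have h1 : 0 ≤ norm1 z / t * Real.log (ξ z) := by positivity
    have h2 : norm1 z / t ≤ ξ z := by
      rw [div_le_iff₀ ht]; linarith
    have h3 : eta z / t ≤ ξ z * Real.log (stepCard d) := by
      have h4 : eta z ≤ (normZ z : ℝ) * Real.log (stepCard d) := eta_le hd z
      have h5 : eta z / t ≤ (norm1 z / t) * Real.log (stepCard d) := by
        rw [div_mul_eq_mul_div]
        exact (div_le_div_iff_of_pos_right ht).mpr (by rw [norm1]; exact h4)
      calc eta z / t ≤ (norm1 z / t) * Real.log (stepCard d) := h5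
        _ ≤ ξ z * Real.log (stepCard d) := mul_le_mul_of_nonneg_right h2 hL
    nlinarith
  · nlinarith

lemma Phi_lower {d : ℕ} (ξ : (Fin d → ℤ) → ℝ) {t : ℝ} {z : Fin d → ℤ}
    (hξ1 : 1 ≤ ξ z) (ht1 : 1 ≤ t) (ht2 : norm1 z ≤ t)
    (ht3 : norm1 z * Real.log (ξ z) ≤ t) :
    ξ z - 1 ≤ Phi ξ t z := by
  have ht : (0:ℝ) < t := by linarith
  have hw : norm1 z ≤ t * ξ z := le_trans ht2 (by nlinarith)
  rw [Phi, if_pos hw]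
  have h1 : norm1 z / t * Real.log (ξ z) ≤ 1 := by
    rw [div_mul_eq_mul_div, div_le_one ht]; exact ht3
  have h2 : 0 ≤ eta z / t := div_nonneg (eta_nonneg z) (le_of_lt ht)
  linarith



lemma pick3 {β : Type*} {a b c p q : β} (hab : a ≠ b) (hac : a ≠ c) (hbc : b ≠ c) :
    (a ≠ p ∧ a ≠ q) ∨ (b ≠ p ∧ b ≠ q) ∨ (c ≠ p ∧ c ≠ q) := by
  by_cases h1 : a = p
  · by_cases h2 : b = q
    · subst h1; subst h2
      exact Or.inr (Or.inr ⟨Ne.symm hac, Ne.symm hbc⟩)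
    · exact Or.inr (Or.inl ⟨fun h => hab (h1.trans h.symm), h2⟩)
  · by_cases h2 : a = q
    · by_cases h3 : b = p
      · subst h2; subst h3
        exact Or.inr (Or.inr ⟨Ne.symm hbc, Ne.symm hac⟩)
      · exact Or.inr (Or.inl ⟨h3, fun h => hab (h2.trans h.symm)⟩)
    · exact Or.inl ⟨h1, h2⟩

lemma main_det {d : ℕ} (hd : 1 ≤ d) (f : (Fin d → ℤ) → ℝ)
    (Y1 Y2 Y3 : ℝ → Fin d → ℤ)
    (hf1 : ∀ z, 1 ≤ f z)
    (hub : ∀ M : ℝ, ∃ z, M < f z)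
    (h12 : ∀ t : ℝ, 0 < t → Y1 t ≠ Y2 t)
    (h13 : ∀ t : ℝ, 0 < t → Y1 t ≠ Y3 t)
    (h23 : ∀ t : ℝ, 0 < t → Y2 t ≠ Y3 t)
    (m1 : ∀ t : ℝ, 0 < t → ∀ z, Phi f t z ≤ Phi f t (Y1 t))
    (m2 : ∀ t : ℝ, 0 < t → ∀ z, z ≠ Y1 t → Phi f t z ≤ Phi f t (Y2 t))
    (m3 : ∀ t : ℝ, 0 < t → ∀ z, z ≠ Y1 t → z ≠ Y2 t → Phi f t z ≤ Phi f t (Y3 t)) :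
    ∃ t₀ : ℝ, 0 < t₀ ∧
      (∀ s u : ℝ, t₀ < s → s < u → Phi f s (Y1 s) < Phi f u (Y1 u)) ∧
      (∀ s u : ℝ, t₀ < s → s < u → Phi f s (Y2 s) < Phi f u (Y2 u)) ∧
      (∀ s u : ℝ, t₀ < s → s < u → Phi f s (Y3 s) < Phi f u (Y3 u)) := by
  classical
  set L := Real.log (stepCard d) with hLdef
  have hL : 0 ≤ L := Real.log_nonneg (by exact_mod_cast one_le_stepCard hd)
  set K := (stepCard d : ℝ) with hKdef
  have hK1 : 1 ≤ K := by rw [hKdef]; exact_mod_cast one_le_stepCard hd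
  set C := (max (f 0) K + 1) * (1 + L) with hCdef
  have hf0 : 1 ≤ f 0 := hf1 0
  have hmaxpos : 1 ≤ max (f 0) K := le_trans hf0 (le_max_left _ _)
  have hCpos : 0 < C := by nlinarith
  -- ordering chain
  have chain : ∀ t : ℝ, 0 < t →
      Phi f t (Y3 t) ≤ Phi f t (Y2 t) ∧ Phi f t (Y2 t) ≤ Phi f t (Y1 t) :=
    fun t ht => ⟨m2 t ht _ (Ne.symm (h13 t ht)), m1 t ht _⟩
  -- sites where Phi is large are good
  have hgoodsite : ∀ t : ℝ, 0 < t → ∀ w, C < Phi f t w →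
      norm1 w ≤ t * f w ∧ w ≠ 0 ∧ K < f w := by
    intro t ht w hPhi
    have hwin : norm1 w ≤ t * f w := by
      by_contra hcon
      rw [Phi, if_neg hcon] at hPhi; linarith
    have hup := Phi_upper hd f ht (hf1 w)
    have hLL : (0:ℝ) < 1 + L := by linarith
    have h1 : max (f 0) K + 1 < f w := by
      have h2 : (max (f 0) K + 1) * (1 + L) < f w * (1 + L) := lt_of_lt_of_le hPhi hup
      exact lt_of_mul_lt_mul_right h2 (le_of_lt hLL)
    refine ⟨hwin, ?_, ?_⟩
    · intro h0
      rw [h0] at h1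
      have := le_max_left (f 0) K; linarith
    · have := le_max_right (f 0) K; linarith
  -- choose three distinct sites with large potential
  obtain ⟨z1, hz1⟩ := hub (C + 1)
  obtain ⟨z2, hz2⟩ := hub (max (C + 1) (f z1))
  obtain ⟨z3, hz3⟩ := hub (max (max (C + 1) (f z1)) (f z2))
  have hz2C : C + 1 < f z2 := lt_of_le_of_lt (le_max_left _ _) hz2
  have hz3C : C + 1 < f z3 :=
    lt_of_le_of_lt (le_trans (le_max_left _ _) (le_max_left _ _)) hz3
  have hz12 : f z1 < f z2 := lt_of_le_of_lt (le_max_right _ _) hz2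
  have hz13 : f z1 < f z3 :=
    lt_of_le_of_lt (le_trans (le_max_right _ _) (le_max_left _ _)) hz3
  have hz23 : f z2 < f z3 := lt_of_le_of_lt (le_max_right _ _) hz3
  have hne12' : z1 ≠ z2 := fun h => by rw [h] at hz12; exact lt_irrefl _ hz12
  have hne13' : z1 ≠ z3 := fun h => by rw [h] at hz13; exact lt_irrefl _ hz13
  have hne23' : z2 ≠ z3 := fun h => by rw [h] at hz23; exact lt_irrefl _ hz23
  -- threshold
  set T : (Fin d → ℤ) → ℝ := fun z => max 1 (max (norm1 z) (norm1 z * Real.log (f z))) with hT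
  set t₀ : ℝ := max (T z1) (max (T z2) (T z3)) with ht₀def
  have hT1 : ∀ z, 1 ≤ T z := fun z => le_max_left _ _
  have ht₀1 : 1 ≤ t₀ := le_trans (hT1 z1) (le_max_left _ _)
  have ht₀pos : 0 < t₀ := lt_of_lt_of_le zero_lt_one ht₀1
  -- Phi at the chosen sites is eventually large
  have hlow : ∀ t : ℝ, t₀ < t → ∀ z, C + 1 < f z → T z ≤ t₀ → C < Phi f t z := by
    intro t ht z hz hTz
    have h1 : T z ≤ t := le_trans hTz (le_of_lt ht)
    have h2 : (1:ℝ) ≤ t := le_trans (le_max_left _ _) h1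
    have h3 : norm1 z ≤ t := le_trans (le_trans (le_max_left _ _) (le_max_right _ _)) h1
    have h4 : norm1 z * Real.log (f z) ≤ t :=
      le_trans (le_trans (le_max_right _ _) (le_max_right _ _)) h1
    have := Phi_lower f (hf1 z) h2 h3 h4
    linarith
  have hTz1 : T z1 ≤ t₀ := le_max_left _ _
  have hTz2 : T z2 ≤ t₀ := le_trans (le_max_left _ _) (le_max_right _ _)
  have hTz3 : T z3 ≤ t₀ := le_trans (le_max_right _ _) (le_max_right _ _)
  -- the third maximum is eventually large
  have hbig3 : ∀ t : ℝ, t₀ < t → C < Phi f t (Y3 t) := by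
    intro t ht
    have ht0 : 0 < t := lt_trans ht₀pos ht
    rcases pick3 (p := Y1 t) (q := Y2 t) hne12' hne13' hne23' with ⟨h, h'⟩ | ⟨h, h'⟩ | ⟨h, h'⟩
    · exact lt_of_lt_of_le (hlow t ht z1 hz1 hTz1) (m3 t ht0 z1 h h')
    · exact lt_of_lt_of_le (hlow t ht z2 hz2C hTz2) (m3 t ht0 z2 h h')
    · exact lt_of_lt_of_le (hlow t ht z3 hz3C hTz3) (m3 t ht0 z3 h h')
  have hbig2 : ∀ t : ℝ, t₀ < t → C < Phi f t (Y2 t) :=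
    fun t ht => lt_of_lt_of_le (hbig3 t ht) (chain t (lt_trans ht₀pos ht)).1
  have hbig1 : ∀ t : ℝ, t₀ < t → C < Phi f t (Y1 t) :=
    fun t ht => lt_of_lt_of_le (hbig2 t ht) (chain t (lt_trans ht₀pos ht)).2
  -- strict monotonicity at good sites
  have hmono : ∀ s u : ℝ, t₀ < s → s < u → ∀ w, C < Phi f s w → Phi f s w < Phi f u w := by
    intro s u hs hsu w hw
    have hs0 : 0 < s := lt_trans ht₀pos hs
    obtain ⟨hwin, hne0, hKw⟩ := hgoodsite s hs0 w hw
    exact Phi_strict_mono hd f (hf1 w) hne0 hKw hwin hs0 hsu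
  refine ⟨t₀, ht₀pos, ?_, ?_, ?_⟩
  · intro s u hs hsu
    have hu0 : 0 < u := lt_trans (lt_trans ht₀pos hs) hsu
    calc Phi f s (Y1 s) < Phi f u (Y1 s) := hmono s u hs hsu _ (hbig1 s hs)
      _ ≤ Phi f u (Y1 u) := m1 u hu0 _
  · intro s u hs hsu
    have hs0 : 0 < s := lt_trans ht₀pos hs
    have hu0 : 0 < u := lt_trans hs0 hsu
    by_cases hcase : Y1 s = Y1 u
    · have hne : Y2 s ≠ Y1 u := by
        rw [← hcase]; exact Ne.symm (h12 s hs0)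
      calc Phi f s (Y2 s) < Phi f u (Y2 s) := hmono s u hs hsu _ (hbig2 s hs)
        _ ≤ Phi f u (Y2 u) := m2 u hu0 _ hne
    · calc Phi f s (Y2 s) ≤ Phi f s (Y1 s) := (chain s hs0).2
        _ < Phi f u (Y1 s) := hmono s u hs hsu _ (hbig1 s hs)
        _ ≤ Phi f u (Y2 u) := m2 u hu0 _ hcase
  · intro s u hs hsu
    have hs0 : 0 < s := lt_trans ht₀pos hs
    have hu0 : 0 < u := lt_trans hs0 hsu
    rcases pick3 (p := Y1 u) (q := Y2 u) (h12 s hs0) (h13 s hs0) (h23 s hs0)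
      with ⟨h, h'⟩ | ⟨h, h'⟩ | ⟨h, h'⟩
    · calc Phi f s (Y3 s) ≤ Phi f s (Y1 s) := le_trans (chain s hs0).1 (chain s hs0).2
        _ < Phi f u (Y1 s) := hmono s u hs hsu _ (hbig1 s hs)
        _ ≤ Phi f u (Y3 u) := m3 u hu0 _ h h'
    · calc Phi f s (Y3 s) ≤ Phi f s (Y2 s) := (chain s hs0).1
        _ < Phi f u (Y2 s) := hmono s u hs hsu _ (hbig2 s hs)
        _ ≤ Phi f u (Y3 u) := m3 u hu0 _ h h'
    · calc Phi f s (Y3 s) < Phi f u (Y3 s) := hmono s u hs hsu _ (hbig3 s hs)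
        _ ≤ Phi f u (Y3 u) := m3 u hu0 _ h h'


theorem top_values_eventually_increasing
    {d : ℕ} (hd : 1 ≤ d) {α : ℝ} (hα : (d : ℝ) < α)
    {Ω : Type*} [MeasurableSpace Ω] (P : Measure Ω) [IsProbabilityMeasure P]
    (ξ : (Fin d → ℤ) → Ω → ℝ)
    (hmeas : ∀ z, Measurable (ξ z))
    (hindep : iIndepFun ξ P)
    (hpareto : ∀ z, IsPareto P α (ξ z))
    (Z1 : Ω → ℝ → Fin d → ℤ)
    (hZ1meas : Measurable (Function.uncurry Z1))
    (hZ1 : ∀ᵐ ω ∂P, ∀ t : ℝ, 0 < t →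
      ∀ z, Phi (fun x => ξ x ω) t z ≤ Phi (fun x => ξ x ω) t (Z1 ω t))
    (Z2 : Ω → ℝ → Fin d → ℤ)
    (hZ2meas : Measurable (Function.uncurry Z2))
    (hne12 : ∀ ω, ∀ t : ℝ, 0 < t → Z1 ω t ≠ Z2 ω t)
    (hZ2 : ∀ᵐ ω ∂P, ∀ t : ℝ, 0 < t →
      ∀ z, z ≠ Z1 ω t → Phi (fun x => ξ x ω) t z ≤ Phi (fun x => ξ x ω) t (Z2 ω t))
    (Z3 : Ω → ℝ → Fin d → ℤ)
    (hZ3meas : Measurable (Function.uncurry Z3))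
    (hne13 : ∀ ω, ∀ t : ℝ, 0 < t → Z1 ω t ≠ Z3 ω t)
    (hne23 : ∀ ω, ∀ t : ℝ, 0 < t → Z2 ω t ≠ Z3 ω t)
    (hZ3 : ∀ᵐ ω ∂P, ∀ t : ℝ, 0 < t →
      ∀ z, z ≠ Z1 ω t → z ≠ Z2 ω t → Phi (fun x => ξ x ω) t z ≤ Phi (fun x => ξ x ω) t (Z3 ω t)) :
    ∀ᵐ ω ∂P, ∃ t₀ : ℝ, 0 < t₀ ∧ ∀ Z ∈ [Z1, Z2, Z3], ∀ s u' : ℝ, t₀ < s → s < u' →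
      Phi (fun x => ξ x ω) s (Z ω s) < Phi (fun x => ξ x ω) u' (Z ω u') := by
  classical
  -- a.s. the potential is everywhere at least 1
  have h_ae1 : ∀ᵐ ω ∂P, ∀ z, 1 ≤ ξ z ω := by
    rw [MeasureTheory.ae_all_iff]
    intro z
    rw [ae_iff]
    refine measure_mono_null ?_
      (measure_iUnion_null (s := fun n : ℕ => {ω | ξ z ω ≤ 1 - 1/(n+1)})
        fun n => (hpareto z).2 _ ?_)
    · intro ω hω
      simp only [Set.mem_setOf_eq, not_le] at hω
      obtain ⟨n, hn⟩ := exists_nat_one_div_lt (by linarith : (0:ℝ) < 1 - ξ z ω)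
      exact Set.mem_iUnion.mpr ⟨n, by simp only [Set.mem_setOf_eq]; linarith⟩
    · have h0 : (0:ℝ) < 1/(n+1) := by positivity
      linarith
  -- a.s. the potential is unbounded
  have h_aeub : ∀ᵐ ω ∂P, ∀ n : ℕ, ∃ z, (n:ℝ) + 1 < ξ z ω := by
    rw [MeasureTheory.ae_all_iff]
    intro n
    rw [ae_iff]
    have heq : {ω | ¬ ∃ z, (n:ℝ) + 1 < ξ z ω} = {ω | ∀ z, ξ z ω ≤ (n:ℝ) + 1} := by
      ext ω; simp [not_lt]
    rw [heq]
    set x : ℝ := (n:ℝ) + 1 with hx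
    have hx1 : (1:ℝ) ≤ x := by
      have := Nat.cast_nonneg (α := ℝ) n
      rw [hx]; linarith
    set c := ENNReal.ofReal (1 - x ^ (-α)) with hc
    have hcz : ∀ z, P (ξ z ⁻¹' Set.Iic x) = c := fun z => (hpareto z).1 x hx1
    have hc1 : c < 1 := by
      rw [hc, ENNReal.ofReal_lt_one]
      have hp : 0 < x ^ (-α) := Real.rpow_pos_of_pos (by linarith) _
      linarith
    have key : ∀ N : ℕ, P {ω | ∀ z, ξ z ω ≤ x} ≤ c ^ N := by
      intro N
      set e : ℕ → (Fin d → ℤ) := fun k j => if j = ⟨0, hd⟩ then (k:ℤ) else 0 with he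
      have hinj : Function.Injective e := by
        intro a b h
        have := congrFun h ⟨0, hd⟩
        simpa [he] using this
      set S : Finset (Fin d → ℤ) := (Finset.range N).image e with hS
      have hsub : {ω | ∀ z, ξ z ω ≤ x} ⊆ ⋂ z ∈ S, ξ z ⁻¹' Set.Iic x := by
        intro ω hω
        simp only [Set.mem_iInter]
        intro z _
        exact hω z
      have hprod := hindep.measure_inter_preimage_eq_mul S
        (sets := fun _ => Set.Iic x) (fun i _ => measurableSet_Iic)
      calc P {ω | ∀ z, ξ z ω ≤ x} ≤ P (⋂ z ∈ S, ξ z ⁻¹' Set.Iic x) := measure_mono hsub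
        _ = ∏ z ∈ S, P (ξ z ⁻¹' Set.Iic x) := hprod
        _ = c ^ S.card := by rw [Finset.prod_congr rfl fun z _ => hcz z, Finset.prod_const]
        _ = c ^ N := by rw [hS, Finset.card_image_of_injective _ hinj, Finset.card_range]
    have htend := ENNReal.tendsto_pow_atTop_nhds_zero_of_lt_one hc1
    exact le_antisymm (ge_of_tendsto' htend key) (zero_le)
  filter_upwards [hZ1, hZ2, hZ3, h_ae1, h_aeub] with ω hm1 hm2 hm3 hω1 hωub
  have hub : ∀ M : ℝ, ∃ z, M < ξ z ω := by
    intro M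
    obtain ⟨n, hn⟩ := exists_nat_gt M
    obtain ⟨z, hz⟩ := hωub n
    exact ⟨z, by linarith⟩
  obtain ⟨t₀, ht₀, H1, H2, H3⟩ := main_det hd (fun z => ξ z ω) (Z1 ω) (Z2 ω) (Z3 ω)
    hω1 hub (fun t ht => hne12 ω t ht) (fun t ht => hne13 ω t ht) (fun t ht => hne23 ω t ht)
    (fun t ht z => hm1 t ht z) (fun t ht z hz => hm2 t ht z hz)
    (fun t ht z h h' => hm3 t ht z h h')
  refine ⟨t₀, ht₀, ?_⟩
  intro Z hZ
  simp only [List.mem_cons, List.not_mem_nil, or_false] at hZ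
  rcases hZ with rfl | rfl | rfl
  · exact H1
  · exact H2
  · exact H3

end PAM
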